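/- Let e1, e2 ∈ {0, 1, …, N−1} with e1 < e2 and suppose e1 + e2 ≡ 1 − N/2 (mod N). For every odd shift τ = 2τ0 + 1 with 0 ≤ τ0 ≤ N−1, the periodic cross-correlation of S^{e1} and S^{e2} satisfies: R_{S^{e1},S^{e2}}(2τ0+1) = −N − N1 if τ0 ≡ −e2 − N/2 or τ0 ≡ −e2 (mod N); and R_{S^{e1},S^{e2}}(2τ0+1) = −2N2 otherwise. -/

import Mathlib

/-- The geometric sequence of the first type: `t¹ₙ = 1` iff the Legendre symbol of
`Tr(ω^n)` is `-1`, and `0` otherwise (i.e. when the symbol is `0` or `1`). -/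
noncomputable def ntuT1 (p : ℕ) [Fact p.Prime] {F : Type} [Field F]
    [Algebra (ZMod p) F] (ω : F) (n : ℕ) : ZMod 2 :=
  if legendreSym p ((Algebra.trace (ZMod p) F (ω ^ n)).val : ℤ) = -1 then 1 else 0

/-- The geometric sequence of the second type: `t²ₙ = 0` iff the Legendre symbol of
`Tr(ω^n)` is `1`, and `1` otherwise (i.e. when the symbol is `0` or `-1`). -/
noncomputable def ntuT2 (p : ℕ) [Fact p.Prime] {F : Type} [Field F]
    [Algebra (ZMod p) F] (ω : F) (n : ℕ) : ZMod 2 :=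
  if legendreSym p ((Algebra.trace (ZMod p) F (ω ^ n)).val : ℤ) = 1 then 0 else 1

/-- Periodic cross-correlation at shift `τ` of two `N`-periodic binary sequences:
`R_{s,s'}(τ) = Σ_{i=0}^{N-1} (-1)^{s_i + s'_{i+τ}}`, indices taken modulo `N`. -/
def pcorr (N : ℕ) (s s' : ℕ → ZMod 2) (τ : ℤ) : ℤ :=
  ∑ i ∈ Finset.range N, (-1 : ℤ) ^ ((s i + s' ((((i : ℤ) + τ) % (N : ℤ)).toNat)).val)

/-- The interleaved sequence of `t` and the left shift by `e` of `u`: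
`n = 2j ↦ t j`, `n = 2j+1 ↦ u (j + e)`. -/
def ntuInterleave (t u : ℕ → ZMod 2) (e : ℕ) (n : ℕ) : ZMod 2 :=
  if n % 2 = 0 then t (n / 2) else u (n / 2 + e)


/-!
Write `χ` for the quadratic character of `𝔽_p`, `x_n = Tr(ω^n)`, `c_n = χ(x_n)` and `z_n = [x_n = 0]`.
Then `(-1)^{t¹_n} = c_n + z_n` and `(-1)^{t²_n} = c_n - z_n`. With `d = (p^m - 1)/(p - 1)`, the element
`ω^d = Norm(ω)` is a generator of `𝔽_p^×`, hence a non-square, so `x_{n+d} = Norm(ω) x_n` makes `c`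
antiperiodic and `z` periodic with period `d`. The condition on `e₁ + e₂` aligns the two halves of
the interleaved correlation, which collapses to `-4 ∑_{j<d} z_j z_{j+a}` with `a = τ₀ + e₂`. That sum
counts the nonzero `y = ω^j` with `Tr(y) = Tr(ω^a y) = 0`, i.e. the nonzero vectors of the
trace-orthogonal of `span{1, ω^a}`, a subspace of codimension 1 if `ω^a ∈ 𝔽_p` (that is, if `d ∣ a`)
and of codimension 2 otherwise.
-/

open Finset Function Module

namespace Function

variable {M : Type*}

theorem Periodic.sum_range_comp_add [AddCommGroup M] {g : ℕ → M} {N : ℕ} (hg : Periodic g N)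
    (e : ℕ) : ∑ j ∈ range N, g (j + e) = ∑ j ∈ range N, g j := by
  induction e with
  | zero => rfl
  | succ e ih =>
    have hsucc := sum_range_succ' (fun j => g (j + e)) N
    rw [sum_range_succ, add_comm N e, hg, zero_add, add_left_inj] at hsucc
    rw [← ih, hsucc]
    simp only [add_right_comm _ 1 e, add_assoc]

theorem Periodic.sum_range_mul [AddCommMonoid M] {g : ℕ → M} {d : ℕ} (hg : Periodic g d)
    (k : ℕ) : ∑ j ∈ range (k * d), g j = k • ∑ j ∈ range d, g j := by
  induction k with
  | zero => simp
  | succ k ih =>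
    have hshift (j : ℕ) : g (k * d + j) = g j := by rw [add_comm, ← smul_eq_mul, hg.nsmul]
    rw [add_one_mul, sum_range_add, ih, succ_nsmul]
    simp only [hshift]

theorem Antiperiodic.sum_range_two_mul [AddCommGroup M] {g : ℕ → M} {d : ℕ}
    (hg : Antiperiodic g d) : ∑ j ∈ range (2 * d), g j = 0 := by
  rw [two_mul, sum_range_add, ← add_neg_cancel (∑ j ∈ range d, g j), ← sum_neg_distrib]
  exact congrArg _ (sum_congr rfl fun j _ => by rw [add_comm, hg j])

end Function

theorem Finset.sum_range_two_mul {M : Type*} [AddCommMonoid M] (f : ℕ → M) (n : ℕ) :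
    ∑ i ∈ range (2 * n), f i = ∑ j ∈ range n, f (2 * j) + ∑ j ∈ range n, f (2 * j + 1) := by
  induction n with
  | zero => simp
  | succ n ih =>
    rw [mul_add_one, sum_range_succ, sum_range_succ, ih, sum_range_succ, sum_range_succ]
    abel

theorem Nat.two_mul_pow_sub_one_div {p : ℕ} (hp : 2 ≤ p) (m : ℕ) :
    2 * (p ^ m - 1) / (p - 1) = 2 * ∑ i ∈ range m, p ^ i := by
  rw [Nat.mul_div_assoc _ (Nat.sub_one_dvd_pow_sub_one p m), Nat.geomSum_eq hp]

theorem Int.two_mul_pow_sub_one_ediv {p : ℤ} (hp : p ≠ 1) (k : ℕ) :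
    2 * (p ^ k - 1) / (p - 1) = 2 * ∑ i ∈ Finset.range k, p ^ i := by
  rw [← geom_sum_mul, ← mul_assoc, Int.mul_ediv_cancel _ (sub_ne_zero.2 hp)]

theorem Int.natCast_modEq_sub_or_modEq_iff_dvd {τ e d : ℕ} :
    (τ : ℤ) ≡ -e - d [ZMOD (2 * d : ℕ)] ∨ (τ : ℤ) ≡ -e [ZMOD (2 * d : ℕ)] ↔ d ∣ τ + e := by
  simp only [Int.modEq_iff_dvd, ← Int.natCast_dvd_natCast]
  push_cast
  constructor
  · rintro (⟨k, hk⟩ | ⟨k, hk⟩)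
    · exact ⟨-(2 * k + 1), by linear_combination -hk⟩
    · exact ⟨-(2 * k), by linear_combination -hk⟩
  · rintro ⟨k, hk⟩
    rcases Int.even_or_odd k with ⟨r, rfl⟩ | ⟨r, rfl⟩
    · exact Or.inr ⟨-r, by linear_combination -hk⟩
    · exact Or.inl ⟨-r - 1, by linear_combination -hk⟩

theorem neg_one_pow_val_add (a b : ZMod 2) :
    (-1 : ℤ) ^ (a + b).val = (-1) ^ a.val * (-1) ^ b.val := by
  fin_cases a <;> fin_cases b <;> rfl

section Interleave

variable {t u : ℕ → ZMod 2} {N : ℕ}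

@[simp]
theorem ntuInterleave_two_mul (e j : ℕ) :
    ntuInterleave t u e (2 * j) = t j := by
  simp [ntuInterleave]

@[simp]
theorem ntuInterleave_two_mul_add_one (e j : ℕ) :
    ntuInterleave t u e (2 * j + 1) = u (j + e) := by
  simp [ntuInterleave, Nat.add_mod, Nat.add_div]

theorem ntuInterleave_periodic (ht : Periodic t N) (hu : Periodic u N) (e : ℕ) :
    Periodic (ntuInterleave t u e) (2 * N) := fun n => by
  simp only [ntuInterleave, Nat.add_mul_mod_self_left, Nat.add_mul_div_left _ _ two_pos,
    add_right_comm _ N e, ht _, hu _]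

theorem pcorr_ntuInterleave_odd (ht : Periodic t N) (hu : Periodic u N) (e e' τ : ℕ) :
    pcorr (2 * N) (ntuInterleave t u e) (ntuInterleave t u e') (2 * τ + 1) =
      ∑ j ∈ range N, (-1 : ℤ) ^ (t j).val * (-1) ^ (u (j + τ + e')).val +
      ∑ j ∈ range N, (-1 : ℤ) ^ (u (j + e)).val * (-1) ^ (t (j + τ + 1)).val := by
  have hidx (i : ℕ) :
      (((i : ℤ) + (2 * τ + 1)) % ((2 * N : ℕ) : ℤ)).toNat = (i + (2 * τ + 1)) % (2 * N) := by
    rw [← Int.toNat_natCast ((i + (2 * τ + 1)) % (2 * N)), Int.natCast_mod]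
    push_cast
    rfl
  simp only [pcorr, hidx, (ntuInterleave_periodic ht hu e').map_mod_nat, neg_one_pow_val_add]
  rw [sum_range_two_mul]
  congr 1 <;> refine sum_congr rfl fun j _ => ?_
  · rw [show 2 * j + (2 * τ + 1) = 2 * (j + τ) + 1 by ring]
    simp
  · rw [show 2 * j + 1 + (2 * τ + 1) = 2 * (j + τ + 1) by ring]
    simp

end Interleave

theorem sum_corr_of_antiperiodic_of_periodic {c z : ℕ → ℤ} {d e a b : ℕ} (hc : Antiperiodic c d)
    (hz : Periodic z d) (hb : e + a + d ≡ b [MOD 2 * d]) :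
    ∑ j ∈ range (2 * d), (c j + z j) * (c (j + a) - z (j + a)) +
      ∑ j ∈ range (2 * d), (c (j + e) - z (j + e)) * (c (j + b) + z (j + b)) =
      -4 * ∑ j ∈ range d, z j * z (j + a) := by
  have hc2 : Periodic c (2 * d) := hc.periodic_two_mul
  have hz2 : Periodic z (2 * d) := hz.nat_mul 2
  have hshift (j : ℕ) : c (j + b) + z (j + b) = -(c (j + e + a) - z (j + e + a)) := by
    have hmod : (j + b) % (2 * d) = (j + e + a + d) % (2 * d) := by
      simpa only [Nat.ModEq, add_assoc] using (hb.add_left j).symm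
    rw [← hc2.map_mod_nat, ← hz2.map_mod_nat, hmod, hc2.map_mod_nat, hz2.map_mod_nat, hc, hz]
    ring
  have hcross : ∑ j ∈ range (2 * d), z j * c (j + a) = 0 :=
    Antiperiodic.sum_range_two_mul fun j => by
      rw [add_right_comm, hz, hc]
      ring
  have hsq : ∑ j ∈ range (2 * d), (c (j + e) - z (j + e)) * (c (j + b) + z (j + b)) =
      -∑ j ∈ range (2 * d), (c j - z j) * (c (j + a) - z (j + a)) := by
    have hper : Periodic (fun k => (c k - z k) * (c (k + a) - z (k + a))) (2 * d) := fun k => by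
      simp only [add_right_comm k (2 * d) a, hc2 _, hz2 _]
    simp only [hshift, mul_neg, sum_neg_distrib]
    exact congrArg Neg.neg (hper.sum_range_comp_add e)
  rw [hsq, ← sub_eq_add_neg, ← sum_sub_distrib]
  calc _ = ∑ j ∈ range (2 * d), (2 * (z j * c (j + a)) - 2 * (z j * z (j + a))) :=
        sum_congr rfl fun j _ => by ring
    _ = -2 * ∑ j ∈ range (2 * d), z j * z (j + a) := by
        rw [sum_sub_distrib, ← mul_sum, ← mul_sum, hcross]; ring
    _ = _ := by
        have hzz : Periodic (fun j => z j * z (j + a)) d := fun j => by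
          simp only [add_right_comm j d a, hz _]
        rw [hzz.sum_range_mul 2, nsmul_eq_mul]; push_cast; ring

section FiniteField

variable {F : Type*} [Field F] [Fintype F] {ω : F}

theorem ne_zero_of_orderOf_eq_card_sub_one (hω : orderOf ω = Fintype.card F - 1) : ω ≠ 0 := by
  rintro rfl
  rw [orderOf_zero] at hω
  have := Fintype.one_lt_card (α := F)
  omega

theorem sum_range_pow_eq_sum_erase_zero [DecidableEq F] {M : Type*} [AddCommMonoid M]
    (hω : orderOf ω = Fintype.card F - 1) (g : F → M) :
    ∑ n ∈ range (Fintype.card F - 1), g (ω ^ n) = ∑ y ∈ univ.erase 0, g y := by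
  have hinj : Set.InjOn (ω ^ ·) (range (Fintype.card F - 1)) := by
    rw [coe_range, ← hω]
    exact pow_injOn_Iio_orderOf
  have himage : (range (Fintype.card F - 1)).image (ω ^ ·) = univ.erase 0 := by
    refine eq_of_subset_of_card_le (fun y hy => ?_) ?_
    · obtain ⟨n, -, rfl⟩ := mem_image.1 hy
      exact mem_erase.2 ⟨pow_ne_zero n (ne_zero_of_orderOf_eq_card_sub_one hω), mem_univ _⟩
    · rw [card_image_of_injOn hinj, card_erase_of_mem (mem_univ 0), card_univ, card_range]
  rw [← himage, sum_image hinj]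

theorem sum_range_pow_indicator_eq {K : Type*} [Field K] [Module K F]
    (hω : orderOf ω = Fintype.card F - 1) (S : Submodule K F) [DecidablePred (· ∈ S)] :
    ∑ n ∈ range (Fintype.card F - 1), (if ω ^ n ∈ S then 1 else 0 : ℤ) = Nat.card S - 1 := by
  classical
  rw [sum_range_pow_eq_sum_erase_zero hω (fun y => if y ∈ S then (1 : ℤ) else 0),
    sum_erase_eq_sub (mem_univ 0), sum_boole, Nat.card_eq_fintype_card, ← Fintype.card_subtype]
  simp

end FiniteField

section TraceForm

variable {K L : Type*} [Field K] [Field L] [Algebra K L]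

theorem mem_orthogonal_traceForm_span {s : Set L} {y : L} :
    y ∈ (Algebra.traceForm K L).orthogonal (Submodule.span K s) ↔
      ∀ x ∈ s, Algebra.trace K L (x * y) = 0 := by
  simp only [LinearMap.BilinForm.mem_orthogonal_iff, Algebra.traceForm_apply]
  constructor
  · exact fun h x hx => h x (Submodule.subset_span hx)
  · intro h x hx
    induction hx using Submodule.span_induction with
    | mem x hx => exact h x hx
    | zero => simp
    | add x x' _ _ hx hx' => simp [add_mul, hx, hx']
    | smul c x _ hx => simp [hx]

theorem natCard_orthogonal_traceForm [Finite K] [FiniteDimensional K L] [Algebra.IsSeparable K L]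
    (W : Submodule K L) :
    Nat.card ((Algebra.traceForm K L).orthogonal W) =
      Nat.card K ^ (finrank K L - finrank K W) := by
  rw [Module.natCard_eq_pow_finrank (K := K),
    LinearMap.BilinForm.finrank_orthogonal (traceForm_nondegenerate K L)]

theorem finrank_span_one_pair_of_mem {γ : L} (hγ : γ ∈ Set.range (algebraMap K L)) :
    finrank K (Submodule.span K {1, γ}) = 1 := by
  obtain ⟨c, rfl⟩ := hγ
  rw [Set.pair_comm, Submodule.span_insert_eq_span, finrank_span_singleton one_ne_zero]
  rw [Algebra.algebraMap_eq_smul_one]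
  exact Submodule.smul_mem _ c (Submodule.mem_span_singleton_self 1)

theorem finrank_span_one_pair_of_notMem {γ : L} (hγ : γ ∉ Set.range (algebraMap K L)) :
    finrank K (Submodule.span K {1, γ}) = 2 := by
  have hli : LinearIndependent K ![1, γ] := by
    rw [LinearIndependent.pair_iff' one_ne_zero]
    exact fun c hc => hγ ⟨c, by rw [Algebra.algebraMap_eq_smul_one, hc]⟩
  rw [← Matrix.range_cons_cons_empty 1 γ ![], finrank_span_eq_card hli, Fintype.card_fin]

theorem FiniteField.pow_sum_pow_eq_algebraMap_norm [Finite L] (x : L) :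
    x ^ ∑ i ∈ range (finrank K L), Nat.card K ^ i = algebraMap K L (Algebra.norm K x) := by
  rw [FiniteField.algebraMap_norm_eq_prod_pow, prod_pow_eq_pow_sum]

end TraceForm

section PrimeField

variable {p : ℕ} [Fact p.Prime] {F : Type*} [Field F] [Fintype F] [Algebra (ZMod p) F] {ω : F}

theorem finrank_eq_of_card_eq_pow {m : ℕ} (hcard : Fintype.card F = p ^ m) :
    finrank (ZMod p) F = m := by
  rw [card_eq_pow_finrank (K := ZMod p), ZMod.card] at hcard
  exact Nat.pow_right_injective (Fact.out : p.Prime).two_le hcard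

theorem geom_sum_mul_sub_one_eq_card_sub_one :
    (∑ i ∈ range (finrank (ZMod p) F), p ^ i) * (p - 1) = Fintype.card F - 1 := by
  have := geom_sum_mul_add (p - 1) (finrank (ZMod p) F)
  rw [Nat.sub_add_cancel (Fact.out : p.Prime).one_lt.le] at this
  rw [card_eq_pow_finrank (K := ZMod p), ZMod.card]
  omega

theorem pow_geom_sum_eq_algebraMap_norm (x : F) :
    x ^ ∑ i ∈ range (finrank (ZMod p) F), p ^ i =
      algebraMap (ZMod p) F (Algebra.norm (ZMod p) x) := by
  simpa using FiniteField.pow_sum_pow_eq_algebraMap_norm (K := ZMod p) x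

theorem quadraticChar_norm_eq_neg_one (hp2 : p ≠ 2) (hω : orderOf ω = Fintype.card F - 1) :
    quadraticChar (ZMod p) (Algebra.norm (ZMod p) ω) = -1 := by
  set d := ∑ i ∈ range (finrank (ZMod p) F), p ^ i
  have hp : p.Prime := Fact.out
  have hp3 : 3 ≤ p := by have := hp.two_le; have := hp.eq_two_or_odd; omega
  have hα : ω ^ d = algebraMap (ZMod p) F (Algebra.norm (ZMod p) ω) :=
    pow_geom_sum_eq_algebraMap_norm ω
  have hα0 : Algebra.norm (ZMod p) ω ≠ 0 := by
    rintro h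
    rw [h, map_zero] at hα
    exact pow_ne_zero d (ne_zero_of_orderOf_eq_card_sub_one hω) hα
  rw [quadraticChar_neg_one_iff_not_isSquare, ZMod.euler_criterion p hα0]
  intro hsq
  have hdvd : Fintype.card F - 1 ∣ d * (p / 2) := by
    rw [← hω]
    apply orderOf_dvd_of_pow_eq_one
    rw [pow_mul, hα, ← map_pow, hsq, map_one]
  have hcard := geom_sum_mul_sub_one_eq_card_sub_one (p := p) (F := F)
  have hd : 0 < d := Nat.pos_of_mul_pos_right (hcard ▸ Nat.sub_pos_of_lt Fintype.one_lt_card)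
  rw [← hcard] at hdvd
  have := Nat.le_of_mul_le_mul_left (Nat.le_of_dvd (Nat.mul_pos hd (by omega)) hdvd) hd
  omega

theorem pow_mem_range_algebraMap_iff (hω : orderOf ω = Fintype.card F - 1) (a : ℕ) :
    ω ^ a ∈ Set.range (algebraMap (ZMod p) F) ↔ ∑ i ∈ range (finrank (ZMod p) F), p ^ i ∣ a := by
  constructor
  · rintro ⟨c, hc⟩
    have hc0 : c ≠ 0 := by
      rintro rfl
      exact pow_ne_zero a (ne_zero_of_orderOf_eq_card_sub_one hω) (by rw [← hc, map_zero])
    have hdvd : Fintype.card F - 1 ∣ a * (p - 1) := by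
      rw [← hω]
      apply orderOf_dvd_of_pow_eq_one
      rw [pow_mul, ← hc, ← map_pow, ZMod.pow_card_sub_one_eq_one hc0, map_one]
    rw [← geom_sum_mul_sub_one_eq_card_sub_one (p := p)] at hdvd
    exact Nat.dvd_of_mul_dvd_mul_right (Nat.sub_pos_of_lt (Fact.out : p.Prime).one_lt) hdvd
  · rintro ⟨k, rfl⟩
    exact ⟨Algebra.norm (ZMod p) ω ^ k, by rw [map_pow, pow_mul, pow_geom_sum_eq_algebraMap_norm]⟩

end PrimeField

section TraceSequences

variable (p : ℕ) [Fact p.Prime] {F : Type} [Field F] [Algebra (ZMod p) F]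

noncomputable def traceQuadChar (ω : F) (n : ℕ) : ℤ :=
  quadraticChar (ZMod p) (Algebra.trace (ZMod p) F (ω ^ n))

noncomputable def traceZeroIndicator (ω : F) (n : ℕ) : ℤ :=
  if Algebra.trace (ZMod p) F (ω ^ n) = 0 then 1 else 0

theorem legendreSym_val (x : ZMod p) : legendreSym p x.val = quadraticChar (ZMod p) x := by
  simp [legendreSym]

variable {p} {ω : F}

theorem ntuT1_eq_ite (n : ℕ) : ntuT1 p ω n = if traceQuadChar p ω n = -1 then 1 else 0 := by
  rw [ntuT1, legendreSym_val, traceQuadChar]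

theorem ntuT2_eq_ite (n : ℕ) : ntuT2 p ω n = if traceQuadChar p ω n = 1 then 0 else 1 := by
  rw [ntuT2, legendreSym_val, traceQuadChar]

theorem neg_one_pow_ntuT1 (n : ℕ) :
    (-1 : ℤ) ^ (ntuT1 p ω n).val = traceQuadChar p ω n + traceZeroIndicator p ω n := by
  rw [ntuT1_eq_ite, traceQuadChar, traceZeroIndicator]
  by_cases hx : Algebra.trace (ZMod p) F (ω ^ n) = 0
  · simp [hx]
  · rcases quadraticChar_dichotomy hx with h | h <;> simp [h, hx, ZMod.val_one]

theorem neg_one_pow_ntuT2 (n : ℕ) :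
    (-1 : ℤ) ^ (ntuT2 p ω n).val = traceQuadChar p ω n - traceZeroIndicator p ω n := by
  rw [ntuT2_eq_ite, traceQuadChar, traceZeroIndicator]
  by_cases hx : Algebra.trace (ZMod p) F (ω ^ n) = 0
  · simp [hx, ZMod.val_one]
  · rcases quadraticChar_dichotomy hx with h | h <;> simp [h, hx, ZMod.val_one]

theorem ntuT1_periodic {N : ℕ} (h : Periodic (traceQuadChar p ω) N) : Periodic (ntuT1 p ω) N :=
  fun n => by simp only [ntuT1_eq_ite, h n]

theorem ntuT2_periodic {N : ℕ} (h : Periodic (traceQuadChar p ω) N) : Periodic (ntuT2 p ω) N :=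
  fun n => by simp only [ntuT2_eq_ite, h n]

variable [Fintype F]

theorem trace_pow_add_geom_sum (ω : F) (n : ℕ) :
    Algebra.trace (ZMod p) F (ω ^ (n + ∑ i ∈ range (finrank (ZMod p) F), p ^ i)) =
      Algebra.norm (ZMod p) ω * Algebra.trace (ZMod p) F (ω ^ n) := by
  rw [pow_add, pow_geom_sum_eq_algebraMap_norm, ← Algebra.commutes, ← Algebra.smul_def,
    map_smul, smul_eq_mul]

theorem traceQuadChar_antiperiodic (hp2 : p ≠ 2) (hω : orderOf ω = Fintype.card F - 1) :
    Antiperiodic (traceQuadChar p ω) (∑ i ∈ range (finrank (ZMod p) F), p ^ i) := fun n => by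
  rw [traceQuadChar, traceQuadChar, trace_pow_add_geom_sum, map_mul,
    quadraticChar_norm_eq_neg_one hp2 hω]
  ring

theorem traceZeroIndicator_periodic (hω : ω ≠ 0) :
    Periodic (traceZeroIndicator p ω) (∑ i ∈ range (finrank (ZMod p) F), p ^ i) := fun n => by
  simp only [traceZeroIndicator, trace_pow_add_geom_sum, mul_eq_zero,
    Algebra.norm_eq_zero_iff, hω, false_or]

theorem sum_traceZeroIndicator_mul (hω : orderOf ω = Fintype.card F - 1) (a : ℕ) :
    ∑ j ∈ range (∑ i ∈ range (finrank (ZMod p) F), p ^ i),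
        traceZeroIndicator p ω j * traceZeroIndicator p ω (j + a) =
      ∑ i ∈ range (finrank (ZMod p) F - finrank (ZMod p) (Submodule.span (ZMod p) {1, ω ^ a})),
        (p : ℤ) ^ i := by
  classical
  set W := (Algebra.traceForm (ZMod p) F).orthogonal (Submodule.span (ZMod p) {1, ω ^ a})
  have hz := traceZeroIndicator_periodic (p := p) (ne_zero_of_orderOf_eq_card_sub_one hω)
  have hind (j : ℕ) : traceZeroIndicator p ω j * traceZeroIndicator p ω (j + a) =
      if ω ^ j ∈ W then 1 else 0 := by
    simp only [W, traceZeroIndicator, mem_orthogonal_traceForm_span, Set.mem_insert_iff,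
      Set.mem_singleton_iff, forall_eq_or_imp, forall_eq, one_mul, pow_add, mul_comm (ω ^ j),
      ite_zero_mul_ite_zero, mul_one]
  have hper : Periodic (fun j => traceZeroIndicator p ω j * traceZeroIndicator p ω (j + a))
      (∑ i ∈ range (finrank (ZMod p) F), p ^ i) := fun j => by
    simp only [add_right_comm j _ a, hz _]
  have hsum := hper.sum_range_mul (p - 1)
  rw [mul_comm, geom_sum_mul_sub_one_eq_card_sub_one] at hsum
  simp only [hind, sum_range_pow_indicator_eq hω, nsmul_eq_mul] at hsum
  rw [natCard_orthogonal_traceForm, Nat.card_zmod] at hsum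
  have hp : 1 < p := (Fact.out : p.Prime).one_lt
  simp only [hind]
  apply mul_left_cancel₀ (Nat.cast_ne_zero.2 (Nat.sub_ne_zero_of_lt hp) : ((p - 1 : ℕ) : ℤ) ≠ 0)
  rw [← hsum, mul_comm, Nat.cast_sub hp.le]
  push_cast
  exact (geom_sum_mul (p : ℤ) _).symm

theorem pcorr_ntuInterleave_ntuT_odd (hp2 : p ≠ 2) (hω : orderOf ω = Fintype.card F - 1)
    {m : ℕ} (hm : finrank (ZMod p) F = m) {e e' : ℕ}
    (h : e + e' + ∑ i ∈ range m, p ^ i ≡ 1 [MOD 2 * ∑ i ∈ range m, p ^ i]) (τ : ℕ) :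
    pcorr (2 * (2 * ∑ i ∈ range m, p ^ i))
        (ntuInterleave (ntuT1 p ω) (ntuT2 p ω) e) (ntuInterleave (ntuT1 p ω) (ntuT2 p ω) e')
        (2 * τ + 1) =
      -4 * ∑ i ∈ range (m - finrank (ZMod p) (Submodule.span (ZMod p) {1, ω ^ (τ + e')})),
        (p : ℤ) ^ i := by
  subst hm
  have hc := traceQuadChar_antiperiodic hp2 hω
  have hz := traceZeroIndicator_periodic (p := p) (ne_zero_of_orderOf_eq_card_sub_one hω)
  have hshift : e + (τ + e') + ∑ i ∈ range (finrank (ZMod p) F), p ^ i ≡ τ + 1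
      [MOD 2 * ∑ i ∈ range (finrank (ZMod p) F), p ^ i] := by
    simpa only [add_comm τ, add_assoc, add_comm τ 1] using h.add_right τ
  rw [pcorr_ntuInterleave_odd (ntuT1_periodic hc.periodic_two_mul)
    (ntuT2_periodic hc.periodic_two_mul)]
  simp only [neg_one_pow_ntuT1, neg_one_pow_ntuT2, add_assoc]
  rw [sum_corr_of_antiperiodic_of_periodic hc hz hshift, sum_traceZeroIndicator_mul hω]

end TraceSequences

theorem stmt16_general (p m : ℕ) [Fact p.Prime] (hp2 : p ≠ 2) (hm : 1 < m)
    (F : Type) [Field F] [Fintype F] [Algebra (ZMod p) F]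
    (hcard : Fintype.card F = p ^ m) (ω : F) (hω : orderOf ω = p ^ m - 1)
    (N : ℕ) (hN : N = 2 * (p ^ m - 1) / (p - 1)) (N1 N2 : ℤ)
    (hN1 : N1 = -2 * (p : ℤ) ^ (m - 1) + 2 * ((p : ℤ) ^ (m - 1) - 1) / ((p : ℤ) - 1))
    (hN2 : N2 = 2 * ((p : ℤ) ^ (m - 2) - 1) / ((p : ℤ) - 1))
    (e1 e2 : ℕ)
    (hcond : (e1 : ℤ) + (e2 : ℤ) ≡ 1 - ((N / 2 : ℕ) : ℤ) [ZMOD (N : ℤ)])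
    (τ0 : ℤ) (hτ0 : 0 ≤ τ0) :
    pcorr (2 * N) (ntuInterleave (ntuT1 p ω) (ntuT2 p ω) e1) (ntuInterleave (ntuT1 p ω) (ntuT2 p ω) e2) (2 * τ0 + 1) =
      if τ0 ≡ -(e2 : ℤ) - ((N / 2 : ℕ) : ℤ) [ZMOD (N : ℤ)] ∨ τ0 ≡ -(e2 : ℤ) [ZMOD (N : ℤ)] then
        -(N : ℤ) - N1
      else -2 * N2 := by
  have hp1 : (p : ℤ) ≠ 1 := Nat.cast_ne_one.2 (Fact.out : p.Prime).ne_one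
  have hω' : orderOf ω = Fintype.card F - 1 := by rw [hω, hcard]
  have hm' := finrank_eq_of_card_eq_pow hcard
  rw [Nat.two_mul_pow_sub_one_div (Fact.out : p.Prime).two_le] at hN
  subst hN
  lift τ0 to ℕ using hτ0 with τ
  rw [Nat.mul_div_cancel_left _ two_pos] at hcond ⊢
  have hcond' : e1 + e2 + ∑ i ∈ range m, p ^ i ≡ 1 [MOD 2 * ∑ i ∈ range m, p ^ i] := by
    rw [← Int.natCast_modEq_iff]
    simpa using hcond.add_right ((∑ i ∈ range m, p ^ i : ℕ) : ℤ)
  rw [pcorr_ntuInterleave_ntuT_odd hp2 hω' hm' hcond' τ]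
  obtain ⟨k, rfl⟩ : ∃ k, m = k + 1 := ⟨m - 1, by omega⟩
  split_ifs with hC <;>
    rw [Int.natCast_modEq_sub_or_modEq_iff_dvd, ← hm', ← pow_mem_range_algebraMap_iff hω'] at hC
  · rw [finrank_span_one_pair_of_mem hC, hN1, Int.two_mul_pow_sub_one_ediv hp1]
    push_cast [sum_range_succ, Nat.add_sub_cancel]
    ring
  · rw [finrank_span_one_pair_of_notMem hC, hN2, Int.two_mul_pow_sub_one_ediv hp1]
    ring

theorem stmt16 (p m : ℕ) [Fact p.Prime] (hp2 : p ≠ 2) (hm : 1 < m)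
    (F : Type) [Field F] [Fintype F] [Algebra (ZMod p) F]
    (hcard : Fintype.card F = p ^ m) (ω : F) (hω : orderOf ω = p ^ m - 1)
    (N : ℕ) (hN : N = 2 * (p ^ m - 1) / (p - 1)) (N1 N2 : ℤ)
    (hN1 : N1 = -2 * (p : ℤ) ^ (m - 1) + 2 * ((p : ℤ) ^ (m - 1) - 1) / ((p : ℤ) - 1))
    (hN2 : N2 = 2 * ((p : ℤ) ^ (m - 2) - 1) / ((p : ℤ) - 1))
    (e1 e2 : ℕ) (he1 : e1 < N) (he2 : e2 < N) (hlt : e1 < e2)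
    (hcond : (e1 : ℤ) + (e2 : ℤ) ≡ 1 - ((N / 2 : ℕ) : ℤ) [ZMOD (N : ℤ)])
    (τ0 : ℤ) (hτ0 : 0 ≤ τ0) (hτ1 : τ0 ≤ (N : ℤ) - 1) :
    pcorr (2 * N) (ntuInterleave (ntuT1 p ω) (ntuT2 p ω) e1) (ntuInterleave (ntuT1 p ω) (ntuT2 p ω) e2) (2 * τ0 + 1) =
      if τ0 ≡ -(e2 : ℤ) - ((N / 2 : ℕ) : ℤ) [ZMOD (N : ℤ)] ∨ τ0 ≡ -(e2 : ℤ) [ZMOD (N : ℤ)] then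
        -(N : ℤ) - N1
      else -2 * N2 :=
  stmt16_general p m hp2 hm F hcard ω hω N hN N1 N2 hN1 hN2 e1 e2 hcond τ0 hτ0
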